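/- arXiv:2106.06915 — 5 statements merged into one kernel-verified Lean document; each statement's English description precedes it below -/
import Mathlib

section
/- If z₁, z₂, z₃, … is a strictly increasing sequence of positive real numbers whose generalized zeta series Z(s) = Σ_{n=1}^∞ z_n^{-s} converges for all sufficiently large real s, then for every n ≥ 0, z_{n+1} = lim_{s→∞} (Z(s) − Σ_{k=1}^n z_k^{-s})^{-1/s}. -/
set_option maxHeartbeats 1200000


open Filter

/-- Recurrence for the terms of a generalized zeta series: for a strictly increasing
sequence of positive reals `z` with `Z(s) = ∑' n, (z n) ^ (-s)` convergent for large `s`,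
one has `z (n+1) = lim_{s → ∞} (Z s - ∑_{k ≤ n} (z k) ^ (-s)) ^ (-1/s)` (indices shifted:
`z n` is the `(n+1)`-st term, the subtracted sum runs over the first `n` terms). -/
theorem zeta_recurrence_root_extraction (z : ℕ → ℝ) (hpos : 0 < z 0) (hmono : StrictMono z)
    (hconv : ∃ s₀ : ℝ, ∀ s ≥ s₀, Summable fun n => (z n) ^ (-s)) (n : ℕ) :
    Tendsto
      (fun s : ℝ =>
        ((∑' k, (z k) ^ (-s)) - ∑ k ∈ Finset.range n, (z k) ^ (-s)) ^ (-1 / s))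
      atTop (nhds (z n)) := by
  obtain ⟨s₀, hs₀⟩ := hconv
  have hzpos : ∀ k, 0 < z k := fun k => hpos.trans_le (hmono.monotone (Nat.zero_le k))
  set m := n + 1
  have hρ : z n / z m < 1 := (div_lt_one (hzpos m)).2 (hmono (Nat.lt_succ_self n))
  have hρ0 : 0 < z n / z m := div_pos (hzpos n) (hzpos m)
  -- constant A : tail sum at s₀
  set A : ℝ := ∑' i, (z (i + m)) ^ (-s₀) with hA
  have hAsum : Summable fun i => (z (i + m)) ^ (-s₀) :=
    (summable_nat_add_iff m).2 (hs₀ s₀ le_rfl)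
  have hA0 : 0 ≤ A := tsum_nonneg fun i => Real.rpow_nonneg (hzpos _).le _
  set B : ℝ := (z m) ^ s₀ * A with hB
  have hB0 : 0 ≤ B := mul_nonneg (Real.rpow_nonneg (hzpos m).le _) hA0
  -- eventually, B * ρ^s ≤ 1
  have hev0 : ∀ᶠ s : ℝ in atTop, B * (z n / z m) ^ s ≤ 1 := by
    have h := (tendsto_rpow_atTop_of_base_lt_one _ (by linarith) hρ).const_mul B
    rw [mul_zero] at h
    exact (h.eventually_lt_const (by norm_num)).mono fun s hs => hs.le
  -- key eventual bounds on the tail T(s)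
  have hT : ∀ᶠ s : ℝ in atTop,
      (z n) ^ (-s) ≤ ((∑' k, (z k) ^ (-s)) - ∑ k ∈ Finset.range n, (z k) ^ (-s)) ∧
      ((∑' k, (z k) ^ (-s)) - ∑ k ∈ Finset.range n, (z k) ^ (-s)) ≤ 2 * (z n) ^ (-s) := by
    filter_upwards [eventually_ge_atTop s₀, hev0] with s hs hBs
    have hsum : Summable fun k => (z k) ^ (-s) := hs₀ s hs
    have hsumn : Summable fun i => (z (i + n)) ^ (-s) := (summable_nat_add_iff n).2 hsum
    have hsumm : Summable fun i => (z (i + m)) ^ (-s) := (summable_nat_add_iff m).2 hsum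
    have htail : (∑' k, (z k) ^ (-s)) - (∑ k ∈ Finset.range n, (z k) ^ (-s))
        = ∑' i, (z (i + n)) ^ (-s) := by
      rw [← Summable.sum_add_tsum_nat_add n hsum]; ring
    rw [htail]
    constructor
    · have := Summable.le_tsum hsumn 0 (fun j _ => Real.rpow_nonneg (hzpos _).le _)
      simpa using this
    · -- split off first term
      have hsplit : (∑' i, (z (i + n)) ^ (-s))
          = (z n) ^ (-s) + ∑' i, (z (i + m)) ^ (-s) := by
        rw [Summable.tsum_eq_zero_add hsumn]
        simp only [zero_add]
        congr 1
        apply tsum_congr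
        intro i
        congr 2
        omega
      rw [hsplit, two_mul]
      gcongr
      -- bound the tail starting at m
      have hterm : ∀ i, (z (i + m)) ^ (-s) ≤ (z (i + m)) ^ (-s₀) * (z m) ^ (s₀ - s) := by
        intro i
        have hge : z m ≤ z (i + m) := hmono.monotone (by omega)
        have : (z (i + m)) ^ (-s) = (z (i + m)) ^ (-s₀) * (z (i + m)) ^ (s₀ - s) := by
          rw [← Real.rpow_add (hzpos _)]; ring_nf
        rw [this]
        exact mul_le_mul_of_nonneg_left
          (Real.rpow_le_rpow_of_nonpos (hzpos m) hge (by linarith))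
          (Real.rpow_nonneg (hzpos _).le _)
      have hle : (∑' i, (z (i + m)) ^ (-s)) ≤ A * (z m) ^ (s₀ - s) := by
        rw [hA, ← tsum_mul_right]
        exact Summable.tsum_le_tsum hterm hsumm (hAsum.mul_right _)
      refine hle.trans ?_
      -- A * (z m)^(s₀-s) = B * ρ^s * (z n)^(-s)
      have heq : A * (z m) ^ (s₀ - s) = (B * (z n / z m) ^ s) * (z n) ^ (-s) := by
        rw [hB, Real.div_rpow (hzpos n).le (hzpos m).le,
          Real.rpow_sub (hzpos m), Real.rpow_neg (hzpos n).le]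
        have h1 : (z m : ℝ) ^ s ≠ 0 := (Real.rpow_pos_of_pos (hzpos m) s).ne'
        have h2 : (z n : ℝ) ^ s ≠ 0 := (Real.rpow_pos_of_pos (hzpos n) s).ne'
        field_simp
      rw [heq]
      calc (B * (z n / z m) ^ s) * (z n) ^ (-s)
          ≤ 1 * (z n) ^ (-s) := by
            gcongr
            exact Real.rpow_nonneg (hzpos n).le _
        _ = (z n) ^ (-s) := one_mul _
  -- squeeze
  have hlow : Tendsto (fun s : ℝ => (2 : ℝ) ^ (-1 / s) * z n) atTop (nhds (z n)) := by
    have h1 : Tendsto (fun s : ℝ => -1 / s) atTop (nhds 0) := by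
      simpa using (tendsto_inv_atTop_zero (𝕜 := ℝ)).neg.congr (fun s => by ring)
    have h2 : Tendsto (fun s : ℝ => (2 : ℝ) ^ (-1 / s)) atTop (nhds 1) := by
      have := (tendsto_const_nhds (x := (2 : ℝ)) (f := atTop)).rpow h1 (Or.inl two_ne_zero)
      simpa using this
    simpa using h2.mul_const (z n)
  refine tendsto_of_tendsto_of_tendsto_of_le_of_le' hlow tendsto_const_nhds ?_ ?_
  · filter_upwards [hT, eventually_gt_atTop (0 : ℝ)] with s ⟨h1, h2⟩ hs
    have hzn : (0 : ℝ) < (z n) ^ (-s) := Real.rpow_pos_of_pos (hzpos n) _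
    have key : ((∑' k, (z k) ^ (-s)) - ∑ k ∈ Finset.range n, (z k) ^ (-s)) ^ (-1 / s)
        ≥ (2 * (z n) ^ (-s)) ^ (-1 / s) :=
      Real.rpow_le_rpow_of_nonpos (lt_of_lt_of_le hzn h1) h2
        (by rw [neg_div]; exact neg_nonpos.2 (by positivity))
    refine le_trans (le_of_eq ?_) key
    rw [Real.mul_rpow (by norm_num) hzn.le, ← Real.rpow_mul (hzpos n).le]
    have hss : -s * (-1 / s) = 1 := by field_simp
    rw [hss, Real.rpow_one]
  · filter_upwards [hT, eventually_gt_atTop (0 : ℝ)] with s ⟨h1, h2⟩ hs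
    have hzn : (0 : ℝ) < (z n) ^ (-s) := Real.rpow_pos_of_pos (hzpos n) _
    have key : ((∑' k, (z k) ^ (-s)) - ∑ k ∈ Finset.range n, (z k) ^ (-s)) ^ (-1 / s)
        ≤ ((z n) ^ (-s)) ^ (-1 / s) :=
      Real.rpow_le_rpow_of_nonpos hzn h1
        (by rw [neg_div]; exact neg_nonpos.2 (by positivity))
    refine key.trans (le_of_eq ?_)
    rw [← Real.rpow_mul (hzpos n).le]
    have : -s * (-1 / s) = 1 := by field_simp
    rw [this, Real.rpow_one]
end

section
/- Let p_n denote the n-th prime and Q_n(s) = Π_{k=1}^n (1 − p_k^{-s})^{-1} the partial Euler product (with Q_0(s) = 1). Then for every n ≥ 0, p_{n+1} = lim_{s→∞} (1 − Q_n(s)/ζ(s))^{-1/s}, where s ranges over real numbers tending to infinity. -/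
/-!
Let `p` be the `n`-th prime in the zero-based indexing of `Nat.nth`. By the Euler product,
`Q_n(s)` is the sum of `m ^ (-s)` over the `p`-smooth `m`, so `1 - Q_n(s) / ζ(s) = D(s) / ζ(s)`
where `D(s)` sums `m ^ (-s)` over the remaining `m ≥ 1`, i.e. those having a prime factor `≥ p`.
Such `m` satisfy `m ≥ p`, and `p` is one of them, so `p ^ (-s) ≤ D(s) ≤ ζ(2) p ^ (2 - s)`
for `s ≥ 2`. Together with `1 ≤ ζ(s) ≤ ζ(2)`, this traps `D(s) / ζ(s)` between two constant
multiples of `p ^ (-s)`, and the `(-1/s)`-th power of a positive constant tends to `1`.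
-/

open Filter

noncomputable def rpowNegHom (s : ℝ) : ℕ →* ℝ where
  toFun m := (m : ℝ) ^ (-s)
  map_one' := by simp
  map_mul' a b := by
    push_cast
    exact Real.mul_rpow a.cast_nonneg b.cast_nonneg

lemma primesBelow_nth_prime (n : ℕ) :
    (Nat.nth Nat.Prime n).primesBelow = (Finset.range n).image (Nat.nth Nat.Prime) := by
  ext p
  simp only [Nat.mem_primesBelow, Finset.mem_image, Finset.mem_range]
  constructor
  · rintro ⟨hlt, hp⟩
    refine ⟨Nat.count Nat.Prime p, ?_, Nat.nth_count hp⟩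
    rwa [← Nat.nth_lt_nth Nat.infinite_setOfPred_prime, Nat.nth_count hp]
  · rintro ⟨k, hk, rfl⟩
    exact ⟨(Nat.nth_lt_nth Nat.infinite_setOfPred_prime).2 hk, Nat.prime_nth_prime k⟩

lemma prod_range_nth_prime_eq_tsum_smoothNumbers {s : ℝ} (hs : 1 < s) (n : ℕ) :
    ∏ k ∈ Finset.range n, (1 - (Nat.nth Nat.Prime k : ℝ) ^ (-s))⁻¹ =
      ∑' m : (Nat.nth Nat.Prime n).smoothNumbers, (m : ℝ) ^ (-s) := by
  have h := EulerProduct.prod_primesBelow_geometric_eq_tsum_smoothNumbers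
    (f := rpowNegHom s) (Real.summable_nat_rpow.mpr (by linarith)) (Nat.nth Nat.Prime n)
  rwa [primesBelow_nth_prime,
    Finset.prod_image fun _ _ _ _ h => Nat.nth_injective Nat.infinite_setOfPred_prime h] at h

lemma tsum_nat_add_one_rpow_neg {s : ℝ} (hs : 1 < s) :
    ∑' j : ℕ, ((j : ℝ) + 1) ^ (-s) = ∑' m : ℕ, (m : ℝ) ^ (-s) := by
  rw [(Real.summable_nat_rpow.mpr (by linarith)).tsum_eq_zero_add]
  simp [Real.zero_rpow (by linarith : -s ≠ 0)]

lemma one_le_tsum_nat_rpow_neg {s : ℝ} (hs : 1 < s) : 1 ≤ ∑' m : ℕ, (m : ℝ) ^ (-s) := by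
  simpa using (Real.summable_nat_rpow.mpr (by linarith)).le_tsum 1
    fun m _ => Real.rpow_nonneg m.cast_nonneg (-s)

lemma tsum_nat_rpow_neg_le_of_le {s t : ℝ} (ht : 1 < t) (hts : t ≤ s) :
    ∑' m : ℕ, (m : ℝ) ^ (-s) ≤ ∑' m : ℕ, (m : ℝ) ^ (-t) := by
  refine Summable.tsum_le_tsum (fun m => ?_) (Real.summable_nat_rpow.mpr (by linarith))
    (Real.summable_nat_rpow.mpr (by linarith))
  rcases m.eq_zero_or_pos with rfl | hm
  · simp [Real.zero_rpow (by linarith : -s ≠ 0), Real.zero_rpow (by linarith : -t ≠ 0)]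
  · exact Real.rpow_le_rpow_of_exponent_le (by exact_mod_cast hm) (by linarith)

lemma tsum_rpow_neg_le_of_forall_le {T : Set ℕ} {N : ℕ} (hN : 0 < N)
    (hT : ∀ m ∈ T, m ≠ 0 → N ≤ m) {s t : ℝ} (ht : 1 < t) (hts : t ≤ s) :
    ∑' m : T, (m : ℝ) ^ (-s) ≤ (∑' m : ℕ, (m : ℝ) ^ (-t)) * (N : ℝ) ^ (t - s) := by
  have hsum_t : Summable fun m : ℕ => (m : ℝ) ^ (-t) := Real.summable_nat_rpow.mpr (by linarith)
  have hterm : ∀ m : T, (m : ℝ) ^ (-s) ≤ (m : ℝ) ^ (-t) * (N : ℝ) ^ (t - s) := by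
    rintro ⟨m, hmT⟩
    rcases eq_or_ne m 0 with rfl | hm
    · simp [Real.zero_rpow (by linarith : -s ≠ 0), Real.zero_rpow (by linarith : -t ≠ 0)]
    have hNm : (N : ℝ) ≤ m := by exact_mod_cast hT m hmT hm
    have hN0 : (0 : ℝ) < N := by exact_mod_cast hN
    calc (m : ℝ) ^ (-s) = (m : ℝ) ^ (-t) * (m : ℝ) ^ (t - s) := by
          rw [← Real.rpow_add (hN0.trans_le hNm)]; ring_nf
      _ ≤ (m : ℝ) ^ (-t) * (N : ℝ) ^ (t - s) := by
          gcongr _ * ?_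
          exact Real.rpow_le_rpow_of_nonpos hN0 hNm (by linarith)
  calc ∑' m : T, (m : ℝ) ^ (-s)
      ≤ ∑' m : T, (m : ℝ) ^ (-t) * (N : ℝ) ^ (t - s) :=
        Summable.tsum_le_tsum hterm ((Real.summable_nat_rpow.mpr (by linarith)).subtype _)
          ((hsum_t.subtype _).mul_right _)
    _ = (∑' m : T, (m : ℝ) ^ (-t)) * (N : ℝ) ^ (t - s) := tsum_mul_right
    _ ≤ (∑' m : ℕ, (m : ℝ) ^ (-t)) * (N : ℝ) ^ (t - s) := by
        gcongr
        exact hsum_t.tsum_subtype_le _ _ fun m => Real.rpow_nonneg m.cast_nonneg _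

lemma one_sub_tsum_smoothNumbers_div {s : ℝ} (hs : 1 < s) (N : ℕ) :
    1 - (∑' m : N.smoothNumbers, (m : ℝ) ^ (-s)) / ∑' m : ℕ, (m : ℝ) ^ (-s) =
      (∑' m : ↑N.smoothNumbersᶜ, (m : ℝ) ^ (-s)) / ∑' m : ℕ, (m : ℝ) ^ (-s) := by
  have hsum : Summable fun m : ℕ => (m : ℝ) ^ (-s) := Real.summable_nat_rpow.mpr (by linarith)
  have hsplit : (∑' m : N.smoothNumbers, (m : ℝ) ^ (-s)) +
      ∑' m : ↑N.smoothNumbersᶜ, (m : ℝ) ^ (-s) = ∑' m : ℕ, (m : ℝ) ^ (-s) :=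
    (hsum.subtype _).tsum_add_tsum_compl (hsum.subtype _)
  have hZ : ∑' m : ℕ, (m : ℝ) ^ (-s) ≠ 0 := (one_pos.trans_le (one_le_tsum_nat_rpow_neg hs)).ne'
  field_simp
  linarith

lemma rpow_neg_le_tsum_compl_smoothNumbers {p : ℕ} (hp : p.Prime) {s : ℝ} (hs : 1 < s) :
    (p : ℝ) ^ (-s) ≤ ∑' m : ↑p.smoothNumbersᶜ, (m : ℝ) ^ (-s) :=
  ((Real.summable_nat_rpow.mpr (by linarith : -s < -1)).subtype _).le_tsum
    ⟨p, fun h => (Nat.mem_smoothNumbers'.mp h p hp dvd_rfl).false⟩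
    fun m _ => Real.rpow_nonneg (m : ℕ).cast_nonneg (-s)

lemma one_sub_prod_div_tsum_eq_tsum_compl_smoothNumbers_div {s : ℝ} (hs : 1 < s) (n : ℕ) :
    1 - (∏ k ∈ Finset.range n, (1 - (Nat.nth Nat.Prime k : ℝ) ^ (-s))⁻¹) /
        ∑' j : ℕ, ((j : ℝ) + 1) ^ (-s) =
      (∑' m : ↑(Nat.nth Nat.Prime n).smoothNumbersᶜ, (m : ℝ) ^ (-s)) /
        ∑' m : ℕ, (m : ℝ) ^ (-s) := by
  rw [prod_range_nth_prime_eq_tsum_smoothNumbers hs, tsum_nat_add_one_rpow_neg hs,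
    one_sub_tsum_smoothNumbers_div hs]

lemma tendsto_const_rpow_neg_inv_atTop {c : ℝ} (hc : c ≠ 0) :
    Tendsto (fun s : ℝ => c ^ (-1 / s)) atTop (nhds 1) := by
  have h : Tendsto (fun s : ℝ => -1 / s) atTop (nhds 0) := by
    simpa [div_eq_mul_inv] using tendsto_inv_atTop_zero.const_mul (-1 : ℝ)
  simpa using (tendsto_const_nhds (x := c)).rpow h (Or.inl hc)

lemma tendsto_rpow_neg_inv_of_le_of_le {f : ℝ → ℝ} {a b P : ℝ} (ha : 0 < a) (hb : 0 < b)
    (hP : 0 < P) (hlow : ∀ᶠ s in atTop, a * P ^ (-s) ≤ f s)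
    (hup : ∀ᶠ s in atTop, f s ≤ b * P ^ (-s)) :
    Tendsto (fun s => f s ^ (-1 / s)) atTop (nhds P) := by
  have hroot : ∀ c : ℝ, 0 < c → ∀ s : ℝ, 0 < s → (c * P ^ (-s)) ^ (-1 / s) = c ^ (-1 / s) * P :=
    fun c hc s hs => by
      rw [Real.mul_rpow hc.le (Real.rpow_nonneg hP.le _), ← Real.rpow_mul hP.le,
        show -s * (-1 / s) = 1 by field_simp, Real.rpow_one]
  refine tendsto_of_tendsto_of_tendsto_of_le_of_le'
    (by simpa using (tendsto_const_rpow_neg_inv_atTop hb.ne').mul_const P)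
    (by simpa using (tendsto_const_rpow_neg_inv_atTop ha.ne').mul_const P) ?_ ?_
  · filter_upwards [hup, hlow, eventually_gt_atTop 0] with s hsup hslow hs
    rw [← hroot b hb s hs]
    exact Real.rpow_le_rpow_of_nonpos ((by positivity : 0 < a * P ^ (-s)).trans_le hslow) hsup
      (div_nonpos_of_nonpos_of_nonneg (by norm_num) hs.le)
  · filter_upwards [hlow, eventually_gt_atTop 0] with s hslow hs
    rw [← hroot a ha s hs]
    exact Real.rpow_le_rpow_of_nonpos (by positivity) hslow
      (div_nonpos_of_nonpos_of_nonneg (by norm_num) hs.le)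

/-- Golomb's recurrence for primes: with `p k = Nat.nth Nat.Prime k` the `(k+1)`-st prime,
`Q n s = ∏_{k < n} (1 - p k ^ (-s))⁻¹` the partial Euler product, and
`ζ(s) = ∑' n, (n+1) ^ (-s)` for real `s`, we have
`p (n+1) = lim_{s → ∞} (1 - Q n s / ζ s) ^ (-1/s)` (here `Nat.nth Nat.Prime n` is the
`(n+1)`-st prime). -/
theorem golomb_prime_recurrence (n : ℕ) :
    Tendsto
      (fun s : ℝ =>
        (1 - (∏ k ∈ Finset.range n, (1 - ((Nat.nth Nat.Prime k : ℝ)) ^ (-s))⁻¹) /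
              (∑' j : ℕ, ((j : ℝ) + 1) ^ (-s))) ^ (-1 / s))
      atTop (nhds (Nat.nth Nat.Prime n : ℝ)) := by
  set p := Nat.nth Nat.Prime n
  have hp : p.Prime := Nat.prime_nth_prime n
  have hp0 : (0 : ℝ) < p := by exact_mod_cast hp.pos
  set ζ₂ := ∑' m : ℕ, (m : ℝ) ^ (-2 : ℝ)
  have hζ₂ : 0 < ζ₂ := one_pos.trans_le (one_le_tsum_nat_rpow_neg one_lt_two)
  refine tendsto_rpow_neg_inv_of_le_of_le (inv_pos.2 hζ₂)
    (mul_pos hζ₂ (Real.rpow_pos_of_pos hp0 2)) hp0 ?_ ?_ <;>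
    filter_upwards [eventually_ge_atTop 2] with s hs <;>
    rw [one_sub_prod_div_tsum_eq_tsum_compl_smoothNumbers_div (by linarith)]
  · rw [inv_mul_eq_div]
    exact div_le_div₀ (by positivity) (rpow_neg_le_tsum_compl_smoothNumbers hp (by linarith))
      (one_pos.trans_le (one_le_tsum_nat_rpow_neg (by linarith)))
      (tsum_nat_rpow_neg_le_of_le one_lt_two hs)
  · calc _ ≤ ∑' m : ↑p.smoothNumbersᶜ, (m : ℝ) ^ (-s) :=
          div_le_self (tsum_nonneg fun m => Real.rpow_nonneg (m : ℕ).cast_nonneg _)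
            (one_le_tsum_nat_rpow_neg (by linarith))
      _ ≤ ζ₂ * (p : ℝ) ^ (2 - s) := tsum_rpow_neg_le_of_forall_le hp.pos
          (fun m hm hm0 => Nat.smoothNumbers_compl p ⟨hm, hm0⟩) one_lt_two hs
      _ = ζ₂ * (p : ℝ) ^ (2 : ℝ) * (p : ℝ) ^ (-s) := by
          rw [mul_assoc, ← Real.rpow_add hp0, sub_eq_add_neg]
end

section
/- The smallest positive zero of the Bessel function J_ν (for ν > −1) satisfies x_{ν,1} = lim_{m→∞} (Z_ν(2m))^{-1/(2m)}, where Z_ν(2m) = Σ_{n=1}^∞ x_{ν,n}^{-2m} is the Rayleigh sum. -/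
/-!
Write `J_ν(t) = (t/2)^ν F(t²/4)`, where `F(z) = ∑ (-1)ⁿ zⁿ / (n! Γ(n+ν+1))` is entire with
`‖F z‖ ≤ C exp ‖z‖` and `F 0 ≠ 0`. Dividing `F` by the product over its zeros `x_k² / 4`, `k ≤ n`,
and applying the maximum modulus principle on the circle of radius `3 x_n² / 4` gives
`2ⁿ⁺¹ ‖F 0‖ ≤ C exp (3 x_n² / 4)`, so `x_n²` grows at least linearly and `∑ x_n⁻⁴ < ∞`.
Then `x_0^(-2m) ≤ Z_ν(2m) ≤ x_0^(4-2m) ∑ x_n⁻⁴`, and taking `2m`-th roots gives the limit.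
-/

open Filter Topology
open scoped Nat

section PowerSums

variable {ι : Type*} {y : ι → ℝ} {c : ℝ} {p k : ℕ}

theorem pow_le_pow_sub_mul_pow {t : ℝ} (ht : 0 ≤ t) (htc : t ≤ c) (hpk : p ≤ k) :
    t ^ k ≤ c ^ (k - p) * t ^ p := by
  rw [← pow_sub_mul_pow t hpk]
  exact mul_le_mul_of_nonneg_right (pow_le_pow_left₀ ht htc _) (pow_nonneg ht p)

theorem Summable.pow_of_le (hy : ∀ i, 0 ≤ y i) (hc : ∀ i, y i ≤ c) (hpk : p ≤ k)
    (hp : Summable fun i ↦ y i ^ p) : Summable fun i ↦ y i ^ k :=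
  (hp.mul_left _).of_nonneg_of_le (fun i ↦ pow_nonneg (hy i) k)
    fun i ↦ pow_le_pow_sub_mul_pow (hy i) (hc i) hpk

theorem tsum_pow_le_pow_sub_mul_tsum_pow (hy : ∀ i, 0 ≤ y i) (hc : ∀ i, y i ≤ c) (hpk : p ≤ k)
    (hp : Summable fun i ↦ y i ^ p) : ∑' i, y i ^ k ≤ c ^ (k - p) * ∑' i, y i ^ p := by
  rw [← tsum_mul_left]
  exact (hp.pow_of_le hy hc hpk).tsum_le_tsum
    (fun i ↦ pow_le_pow_sub_mul_pow (hy i) (hc i) hpk) (hp.mul_left _)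

theorem le_tsum_pow_rpow_inv (hy : ∀ i, 0 ≤ y i) (hk : k ≠ 0) (hsum : Summable fun i ↦ y i ^ k)
    (i : ι) : y i ≤ (∑' i, y i ^ k) ^ (k : ℝ)⁻¹ :=
  calc y i = (y i ^ k) ^ (k : ℝ)⁻¹ := (Real.pow_rpow_inv_natCast (hy i) hk).symm
    _ ≤ (∑' i, y i ^ k) ^ (k : ℝ)⁻¹ :=
      Real.rpow_le_rpow (pow_nonneg (hy i) k) (hsum.le_tsum i fun j _ ↦ pow_nonneg (hy j) k)
        (by positivity)

theorem tendsto_tsum_pow_rpow_inv {i₀ : ι} (hy : ∀ i, 0 ≤ y i) (hmax : ∀ i, y i ≤ y i₀)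
    (hpos : 0 < y i₀) (hp : Summable fun i ↦ y i ^ p) :
    Tendsto (fun k : ℕ ↦ (∑' i, y i ^ k) ^ (k : ℝ)⁻¹) atTop (𝓝 (y i₀)) := by
  set T := ∑' i, y i ^ p
  have hT : y i₀ ^ p ≤ T := hp.le_tsum i₀ fun i _ ↦ pow_nonneg (hy i) p
  have hc : 0 < T / y i₀ ^ p := div_pos ((pow_pos hpos p).trans_le hT) (pow_pos hpos p)
  have hupper : Tendsto (fun k : ℕ ↦ y i₀ * (T / y i₀ ^ p) ^ (k : ℝ)⁻¹) atTop (𝓝 (y i₀)) := by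
    have := ((Real.continuousAt_const_rpow hc.ne').tendsto).comp
      (tendsto_inv_atTop_zero.comp tendsto_natCast_atTop_atTop)
    rw [Real.rpow_zero] at this
    simpa using this.const_mul (y i₀)
  refine tendsto_of_tendsto_of_tendsto_of_le_of_le' tendsto_const_nhds hupper ?_ ?_
  · filter_upwards [eventually_ge_atTop (max p 1)] with k hk
    exact le_tsum_pow_rpow_inv hy (by omega) (hp.pow_of_le hy hmax (le_of_max_le_left hk)) i₀
  · filter_upwards [eventually_ge_atTop (max p 1)] with k hk
    have hk0 : k ≠ 0 := by omega
    have hpk : p ≤ k := le_of_max_le_left hk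
    calc (∑' i, y i ^ k) ^ (k : ℝ)⁻¹ ≤ (y i₀ ^ (k - p) * T) ^ (k : ℝ)⁻¹ := by
          gcongr
          · exact tsum_nonneg fun i ↦ pow_nonneg (hy i) k
          · exact tsum_pow_le_pow_sub_mul_tsum_pow hy hmax hpk hp
      _ = (y i₀ ^ k * (T / y i₀ ^ p)) ^ (k : ℝ)⁻¹ := by
          rw [← pow_sub_mul_pow (y i₀) hpk]
          field_simp
      _ = y i₀ * (T / y i₀ ^ p) ^ (k : ℝ)⁻¹ := by
          rw [Real.mul_rpow (by positivity) hc.le, Real.pow_rpow_inv_natCast hpos.le hk0]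

end PowerSums

theorem differentiable_dslope {F : ℂ → ℂ} (hF : Differentiable ℂ F) (a : ℂ) :
    Differentiable ℂ (dslope F a) := by
  intro z
  rcases eq_or_ne z a with rfl | hz
  · obtain ⟨p, hp⟩ := hF.analyticAt z
    exact hp.has_fpower_series_dslope_fslope.analyticAt.differentiableAt
  · exact (differentiableAt_dslope_of_ne hz).mpr (hF z)

theorem Differentiable.exists_eq_prod_mul {F : ℂ → ℂ} (hF : Differentiable ℂ F) (s : Finset ℂ)
    (hs : ∀ a ∈ s, F a = 0) :
    ∃ G : ℂ → ℂ, Differentiable ℂ G ∧ ∀ w, F w = (∏ a ∈ s, (w - a)) * G w := by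
  classical
  induction s using Finset.induction_on with
  | empty => exact ⟨F, hF, by simp⟩
  | @insert a s ha ih =>
    obtain ⟨G, hG, hFG⟩ := ih fun b hb ↦ hs b (Finset.mem_insert_of_mem hb)
    have hGa : G a = 0 := by
      have hprod : ∏ b ∈ s, (a - b) ≠ 0 :=
        Finset.prod_ne_zero_iff.mpr fun b hb ↦ sub_ne_zero.mpr (ne_of_mem_of_not_mem hb ha).symm
      simpa [hs a (Finset.mem_insert_self a s), hprod] using hFG a
    refine ⟨dslope G a, differentiable_dslope hG a, fun w ↦ ?_⟩
    have hG_eq : (w - a) * dslope G a w = G w := by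
      simpa [hGa] using sub_smul_dslope G a w
    rw [Finset.prod_insert ha, hFG w, ← hG_eq]
    ring

theorem Differentiable.norm_mul_sub_pow_card_le {F : ℂ → ℂ} (hF : Differentiable ℂ F)
    {s : Finset ℂ} (hs : ∀ a ∈ s, F a = 0) {r R M : ℝ} (hr : 0 ≤ r) (hrR : r < R)
    (hsr : ∀ a ∈ s, ‖a‖ ≤ r) (hM : ∀ w, ‖w‖ = R → ‖F w‖ ≤ M) :
    ‖F 0‖ * (R - r) ^ s.card ≤ M * r ^ s.card := by
  obtain ⟨G, hG, hFG⟩ := hF.exists_eq_prod_mul s hs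
  have hRr : 0 < (R - r) ^ s.card := pow_pos (sub_pos.mpr hrR) _
  have hG_sphere : ∀ w, ‖w‖ = R → ‖G w‖ ≤ M / (R - r) ^ s.card := by
    intro w hw
    rw [le_div_iff₀ hRr]
    calc ‖G w‖ * (R - r) ^ s.card ≤ ‖G w‖ * ∏ a ∈ s, ‖w - a‖ := by
          rw [← Finset.prod_const]
          gcongr with a ha
          calc R - r ≤ ‖w‖ - ‖a‖ := by rw [hw]; linarith [hsr a ha]
            _ ≤ ‖w - a‖ := norm_sub_norm_le w a
      _ = ‖F w‖ := by rw [hFG, norm_mul, norm_prod, mul_comm]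
      _ ≤ M := hM w hw
  have hR : 0 < R := hr.trans_lt hrR
  have hG0 : ‖G 0‖ ≤ M / (R - r) ^ s.card := by
    refine Complex.norm_le_of_forall_mem_frontier_norm_le Metric.isBounded_ball
      hG.diffContOnCl (fun w hw ↦ hG_sphere w ?_) (subset_closure (Metric.mem_ball_self hR))
    rw [frontier_ball 0 hR.ne'] at hw
    simpa using hw
  calc ‖F 0‖ * (R - r) ^ s.card = (∏ a ∈ s, ‖a‖) * ‖G 0‖ * (R - r) ^ s.card := by
        simp [hFG 0, norm_prod]
    _ ≤ r ^ s.card * (M / (R - r) ^ s.card) * (R - r) ^ s.card := by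
        gcongr
        simpa using Finset.prod_le_prod (fun a _ ↦ norm_nonneg a) hsr
    _ = M * r ^ s.card := by field_simp

theorem summable_inv_pow_of_linear_le {ρ : ℕ → ℝ} {a b : ℝ} (ha : 0 < a)
    (hρ : ∀ n, a * n - b ≤ ρ n) {p : ℕ} (hp : 1 < p) :
    Summable fun n ↦ (ρ n)⁻¹ ^ p := by
  have hg : Summable fun n : ℕ ↦ (2 / a) ^ p * (1 / (n : ℝ) ^ p) :=
    (Real.summable_one_div_nat_pow.mpr hp).mul_left _
  obtain ⟨N, hN⟩ := exists_nat_ge (2 * b / a)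
  refine hg.of_norm_bounded_eventually_nat ?_
  filter_upwards [eventually_ge_atTop (max N 1)] with n hn
  have hn1 : (1 : ℝ) ≤ n := by exact_mod_cast le_of_max_le_right hn
  have hnN : 2 * b / a ≤ n := hN.trans (by exact_mod_cast le_of_max_le_left hn)
  have hρn : a * n / 2 ≤ ρ n := by
    rw [div_le_iff₀ ha] at hnN
    linarith [hρ n]
  have hpos : 0 < a * n / 2 := by positivity
  have hρpos : 0 < ρ n := hpos.trans_le hρn
  calc ‖(ρ n)⁻¹ ^ p‖ = (ρ n)⁻¹ ^ p := by rw [Real.norm_eq_abs, abs_of_pos (by positivity)]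
    _ ≤ (a * n / 2)⁻¹ ^ p := by gcongr
    _ = (2 / a * (1 / n)) ^ p := by congr 1; field_simp
    _ = (2 / a) ^ p * (1 / (n : ℝ) ^ p) := by rw [mul_pow, one_div_pow]

theorem Differentiable.norm_mul_two_pow_card_le {F : ℂ → ℂ} (hF : Differentiable ℂ F) {C : ℝ}
    (hC : ∀ z, ‖F z‖ ≤ C * Real.exp ‖z‖) {s : Finset ℂ} (hs : ∀ a ∈ s, F a = 0) {r : ℝ}
    (hr : 0 < r) (hsr : ∀ a ∈ s, ‖a‖ ≤ r) :
    ‖F 0‖ * 2 ^ s.card ≤ C * Real.exp (3 * r) := by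
  have h := hF.norm_mul_sub_pow_card_le hs hr.le (by linarith : r < 3 * r) hsr
    fun w hw ↦ hw ▸ hC w
  rw [show 3 * r - r = 2 * r by ring, mul_pow, ← mul_assoc] at h
  exact le_of_mul_le_mul_right h (pow_pos hr _)

theorem Differentiable.summable_inv_norm_sq_of_eq_zero {F : ℂ → ℂ} (hF : Differentiable ℂ F)
    (hF0 : F 0 ≠ 0) {C : ℝ} (hC : ∀ z, ‖F z‖ ≤ C * Real.exp ‖z‖) {z : ℕ → ℂ}
    (hz : Function.Injective z) (hmono : Monotone fun n ↦ ‖z n‖) (hzero : ∀ n, F (z n) = 0) :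
    Summable fun n ↦ ‖z n‖⁻¹ ^ 2 := by
  have hF0' : 0 < ‖F 0‖ := norm_pos_iff.mpr hF0
  have hC0 : 0 < C := by simpa using hF0'.trans_le (hC 0)
  have hcount (n : ℕ) : ‖F 0‖ * 2 ^ (n + 1) ≤ C * Real.exp (3 * ‖z n‖) := by
    have hzn : 0 < ‖z n‖ := norm_pos_iff.mpr fun h ↦ hF0 (h ▸ hzero n)
    simpa [Finset.card_image_of_injective _ hz] using
      hF.norm_mul_two_pow_card_le hC (s := (Finset.range (n + 1)).image z)
        (by simpa using fun k _ ↦ hzero k) hzn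
        (by simpa [Nat.lt_succ_iff] using fun k hk ↦ hmono hk)
  refine summable_inv_pow_of_linear_le (a := Real.log 2 / 3)
    (b := (Real.log C - Real.log ‖F 0‖ - Real.log 2) / 3) (by positivity) (fun n ↦ ?_) one_lt_two
  have hlog := Real.log_le_log (by positivity) (hcount n)
  rw [Real.log_mul hF0'.ne' (by positivity), Real.log_mul hC0.ne' (by positivity),
    Real.log_pow, Real.log_exp] at hlog
  push_cast at hlog
  linarith

section ExponentialType

variable {a : ℕ → ℂ} {C : ℝ}

theorem norm_mul_pow_le_of_norm_le_div_factorial (ha : ∀ n, ‖a n‖ ≤ C / n !) (n : ℕ) {w : ℂ}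
    {R : ℝ} (hw : ‖w‖ ≤ R) : ‖a n * w ^ n‖ ≤ C * (R ^ n / n !) := by
  have hC : 0 ≤ C / n ! := (norm_nonneg _).trans (ha n)
  calc ‖a n * w ^ n‖ = ‖a n‖ * ‖w‖ ^ n := by rw [norm_mul, norm_pow]
    _ ≤ C / n ! * R ^ n := by gcongr; exact ha n
    _ = C * (R ^ n / n !) := by ring

theorem differentiable_tsum_mul_pow_of_norm_le_div_factorial (ha : ∀ n, ‖a n‖ ≤ C / n !) :
    Differentiable ℂ fun z ↦ ∑' n, a n * z ^ n := by
  intro z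
  have hball : DifferentiableOn ℂ (fun z ↦ ∑' n, a n * z ^ n) (Metric.ball 0 (‖z‖ + 1)) :=
    Complex.differentiableOn_tsum_of_summable_norm
      ((Real.summable_pow_div_factorial _).mul_left C)
      (fun n ↦ ((differentiable_id.pow n).const_mul _).differentiableOn) Metric.isOpen_ball
      fun n w hw ↦ norm_mul_pow_le_of_norm_le_div_factorial ha n
        (by simpa using (mem_ball_zero_iff.mp hw).le)
  exact hball.differentiableAt (Metric.isOpen_ball.mem_nhds (by simp))

theorem norm_tsum_mul_pow_le_of_norm_le_div_factorial (ha : ∀ n, ‖a n‖ ≤ C / n !) (z : ℂ) :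
    ‖∑' n, a n * z ^ n‖ ≤ C * Real.exp ‖z‖ := by
  have hbound := fun n ↦ norm_mul_pow_le_of_norm_le_div_factorial ha n (le_refl ‖z‖)
  have hexp := (Real.summable_pow_div_factorial ‖z‖).mul_left C
  calc ‖∑' n, a n * z ^ n‖ ≤ ∑' n, ‖a n * z ^ n‖ :=
        norm_tsum_le_tsum_norm (hexp.of_nonneg_of_le (fun _ ↦ norm_nonneg _) hbound)
    _ ≤ ∑' n, C * (‖z‖ ^ n / n !) :=
        (hexp.of_nonneg_of_le (fun _ ↦ norm_nonneg _) hbound).tsum_le_tsum hbound hexp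
    _ = C * Real.exp ‖z‖ := by
        rw [tsum_mul_left, Real.exp_eq_exp_ℝ, NormedSpace.exp_eq_tsum_div]

end ExponentialType

theorem Real.min_Gamma_le_Gamma_add_nat {s : ℝ} (hs : 0 < s) (n : ℕ) :
    min (Gamma s) (Gamma (s + 1)) ≤ Gamma (s + n) := by
  induction n with
  | zero => simp
  | succ n ih =>
    rcases Nat.eq_zero_or_pos n with rfl | hn
    · simp
    · have h1 : 1 ≤ s + n := by
        have : (1 : ℝ) ≤ n := by exact_mod_cast hn
        linarith
      rw [Nat.cast_succ, ← add_assoc, Gamma_add_one (show s + n ≠ 0 by positivity)]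
      nlinarith [Gamma_pos_of_pos (by positivity : 0 < s + n)]

noncomputable def besselCoeff (ν : ℝ) (n : ℕ) : ℝ :=
  (-1) ^ n / (Real.Gamma (n + ν + 1) * n !)

noncomputable def besselJ (ν t : ℝ) : ℝ :=
  ∑' n : ℕ, besselCoeff ν n * (t / 2) ^ (2 * (n : ℝ) + ν)

noncomputable def besselEntire (ν : ℝ) (z : ℂ) : ℂ :=
  ∑' n : ℕ, (besselCoeff ν n : ℂ) * z ^ n

theorem norm_besselCoeff_le {ν : ℝ} (hν : -1 < ν) (n : ℕ) :
    ‖(besselCoeff ν n : ℂ)‖ ≤ (min (Real.Gamma (ν + 1)) (Real.Gamma (ν + 1 + 1)))⁻¹ / n ! := by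
  have hmin := Real.min_Gamma_le_Gamma_add_nat (by linarith : 0 < ν + 1) n
  have hpos : 0 < min (Real.Gamma (ν + 1)) (Real.Gamma (ν + 1 + 1)) :=
    lt_min (Real.Gamma_pos_of_pos (by linarith)) (Real.Gamma_pos_of_pos (by linarith))
  rw [show ν + 1 + n = n + ν + 1 by ring] at hmin
  have hΓ : 0 < Real.Gamma (n + ν + 1) := hpos.trans_le hmin
  rw [Complex.norm_real, besselCoeff, norm_div, norm_pow, norm_neg, norm_one, one_pow,
    Real.norm_of_nonneg (by positivity), one_div, mul_inv, div_eq_mul_inv]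
  gcongr

theorem differentiable_besselEntire {ν : ℝ} (hν : -1 < ν) : Differentiable ℂ (besselEntire ν) :=
  differentiable_tsum_mul_pow_of_norm_le_div_factorial (norm_besselCoeff_le hν)

theorem norm_besselEntire_le {ν : ℝ} (hν : -1 < ν) (z : ℂ) :
    ‖besselEntire ν z‖ ≤
      (min (Real.Gamma (ν + 1)) (Real.Gamma (ν + 1 + 1)))⁻¹ * Real.exp ‖z‖ :=
  norm_tsum_mul_pow_le_of_norm_le_div_factorial (norm_besselCoeff_le hν) z

theorem besselEntire_zero (ν : ℝ) : besselEntire ν 0 = ((Real.Gamma (ν + 1))⁻¹ : ℝ) := by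
  rw [besselEntire, tsum_eq_single 0 fun n hn ↦ by simp [zero_pow hn]]
  simp [besselCoeff]

theorem besselEntire_ofReal (ν u : ℝ) :
    besselEntire ν u = ((∑' n : ℕ, besselCoeff ν n * u ^ n : ℝ) : ℂ) := by
  rw [besselEntire, Complex.ofReal_tsum]
  push_cast
  rfl

theorem besselJ_eq_rpow_mul (ν : ℝ) {t : ℝ} (ht : 0 < t) :
    besselJ ν t = (t / 2) ^ ν * ∑' n : ℕ, besselCoeff ν n * (t ^ 2 / 4) ^ n := by
  rw [besselJ, ← tsum_mul_left]
  refine tsum_congr fun n ↦ ?_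
  rw [Real.rpow_add (by positivity), Real.rpow_mul (by positivity), Real.rpow_two,
    Real.rpow_natCast]
  ring

theorem besselEntire_eq_zero_of_besselJ_eq_zero {ν t : ℝ} (ht : 0 < t) (h : besselJ ν t = 0) :
    besselEntire ν ((t ^ 2 / 4 : ℝ) : ℂ) = 0 := by
  rw [besselJ_eq_rpow_mul ν ht] at h
  rw [besselEntire_ofReal, (mul_eq_zero.mp h).resolve_left (by positivity), Complex.ofReal_zero]

theorem summable_inv_pow_four_of_besselJ_eq_zero {ν : ℝ} (hν : -1 < ν) {x : ℕ → ℝ}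
    (hpos : ∀ k, 0 < x k) (hmono : StrictMono x) (hzero : ∀ k, besselJ ν (x k) = 0) :
    Summable fun n ↦ (x n)⁻¹ ^ 4 := by
  have hnorm (k : ℕ) : ‖((x k ^ 2 / 4 : ℝ) : ℂ)‖ = x k ^ 2 / 4 := by
    rw [Complex.norm_real, Real.norm_of_nonneg (by positivity)]
  have hsq : StrictMono fun k ↦ x k ^ 2 / 4 := fun k l hkl ↦ by
    have := hpos k
    dsimp only
    gcongr
    exact hmono hkl
  have h := (differentiable_besselEntire hν).summable_inv_norm_sq_of_eq_zero
    (by simp [besselEntire_zero, (Real.Gamma_pos_of_pos (by linarith : 0 < ν + 1)).ne'])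
    (norm_besselEntire_le hν) (z := fun k ↦ ((x k ^ 2 / 4 : ℝ) : ℂ))
    (fun k l h ↦ hsq.injective (Complex.ofReal_injective h))
    (fun k l hkl ↦ by simpa only [hnorm] using hsq.monotone hkl)
    fun k ↦ besselEntire_eq_zero_of_besselJ_eq_zero (hpos k) (hzero k)
  refine (h.mul_left (1 / 16)).congr fun n ↦ ?_
  rw [hnorm]
  field_simp
  norm_num

/-- The smallest positive zero of the Bessel function `J_ν` (order `ν > -1`) is recovered
from the Rayleigh sums: `x 0 = lim_{m → ∞} (Z_ν(2m)) ^ (-1/(2m))` where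
`Z_ν(2m) = ∑' n, (x n)^(-2m)`. -/
theorem bessel_first_zero_limit (ν : ℝ) (hν : -1 < ν) (x : ℕ → ℝ)
    (hx0 : 0 < x 0) (hmono : StrictMono x)
    (hzeros : ∀ t : ℝ, 0 < t →
      ((∑' n : ℕ, ((-1) ^ n / (Real.Gamma (n + ν + 1) * n.factorial)) *
          (t / 2) ^ (2 * (n : ℝ) + ν)) = 0 ↔ ∃ k, t = x k)) :
    Tendsto (fun m : ℕ => (∑' n : ℕ, 1 / (x n) ^ (2 * m)) ^ (-1 / (2 * (m : ℝ))))
      atTop (nhds (x 0)) := by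
  have hxpos (k : ℕ) : 0 < x k := hx0.trans_le (hmono.monotone k.zero_le)
  have hsum := summable_inv_pow_four_of_besselJ_eq_zero hν hxpos hmono
    fun k ↦ (hzeros _ (hxpos k)).2 ⟨k, rfl⟩
  have hlim := ((tendsto_tsum_pow_rpow_inv (i₀ := 0) (fun n ↦ (inv_pos.mpr (hxpos n)).le)
    (fun n ↦ inv_anti₀ hx0 (hmono.monotone n.zero_le)) (inv_pos.mpr hx0) hsum).comp
    (tendsto_id.const_mul_atTop' two_pos)).inv₀ (inv_pos.mpr hx0).ne'
  rw [inv_inv] at hlim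
  refine hlim.congr fun m ↦ ?_
  simp only [Function.comp_apply, id, inv_pow, one_div]
  rw [← Real.rpow_neg (tsum_nonneg fun n ↦ (inv_pos.mpr (pow_pos (hxpos n) _)).le)]
  congr 1
  push_cast
  ring
end

section
/- As k → ∞, Σ_{n=1}^{k} n − [ k/4 + (k³/2)(π²/6 − Σ_{n=1}^{k−1} 1/n²) ] converges to −1/12. -/
open Filter

/-! Auxiliary machinery -/

/-- Telescoping series. -/
theorem aux_telescope_hasSum (g : ℕ → ℝ) (hg : Tendsto g atTop (nhds 0))
    (hs : Summable (fun n => g n - g (n + 1))) :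
    HasSum (fun n => g n - g (n + 1)) (g 0) := by
  have h1 : Tendsto (fun N => ∑ i ∈ Finset.range N, (g i - g (i + 1))) atTop (nhds (g 0)) := by
    simp only [Finset.sum_range_sub']
    simpa using tendsto_const_nhds.sub hg
  have h2 := hs.hasSum.tendsto_sum_nat
  have := tendsto_nhds_unique h2 h1
  rw [← this]
  exact hs.hasSum

theorem aux_basel : HasSum (fun n : ℕ => 1 / ((n : ℝ) + 1) ^ 2) (Real.pi ^ 2 / 6) := by
  have h : HasSum (fun n : ℕ => 1 / ((n + 1 : ℕ) : ℝ) ^ 2)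
      (Real.pi ^ 2 / 6 - ∑ i ∈ Finset.range 1, 1 / ((i : ℝ)) ^ 2) :=
    (hasSum_nat_add_iff' (f := fun n : ℕ => 1 / (n : ℝ) ^ 2) 1).mpr hasSum_zeta_two
  simp only [Finset.sum_range_one, Nat.cast_zero] at h
  norm_num at h
  refine h.congr_fun (fun n => by push_cast; ring_nf)

theorem aux_summable_base : Summable (fun n : ℕ => 1 / ((n : ℝ) + 1) ^ 2) :=
  aux_basel.summable

theorem aux_summable_sq (k : ℕ) (hk : 1 ≤ k) :
    Summable (fun n : ℕ => 1 / ((n : ℝ) + k) ^ 2) := by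
  refine Summable.of_nonneg_of_le (fun n => by positivity) (fun n => ?_) aux_summable_base
  have hk' : (1 : ℝ) ≤ k := by exact_mod_cast hk
  have h1 : ((n : ℝ) + 1) ^ 2 ≤ ((n : ℝ) + k) ^ 2 := by nlinarith [Nat.cast_nonneg (α := ℝ) n]
  exact one_div_le_one_div_of_le (by positivity) h1

theorem aux_summable_R (k : ℕ) (hk : 1 ≤ k) :
    Summable (fun n : ℕ =>
      6 / (((n : ℝ) + k) ^ 2 * ((n : ℝ) + k + 1) * ((n : ℝ) + k + 2) * ((n : ℝ) + k + 3))) := by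
  refine Summable.of_nonneg_of_le (fun n => by positivity) (fun n => ?_) aux_summable_base
  have hk' : (1 : ℝ) ≤ k := by exact_mod_cast hk
  have hn : (0 : ℝ) ≤ n := Nat.cast_nonneg n
  have h1 : 6 * ((n : ℝ) + 1) ^ 2 ≤
      ((n : ℝ) + k) ^ 2 * ((n : ℝ) + k + 1) * ((n : ℝ) + k + 2) * ((n : ℝ) + k + 3) := by
    have ha : ((n : ℝ) + 1) ^ 2 ≤ ((n : ℝ) + k) ^ 2 := by nlinarith
    have hb : (6 : ℝ) ≤ ((n : ℝ) + k + 1) * (((n : ℝ) + k + 2) * ((n : ℝ) + k + 3)) := by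
      nlinarith
    nlinarith [sq_nonneg ((n : ℝ) + k)]
  rw [div_le_div_iff₀ (by positivity) (by positivity)]
  nlinarith

theorem aux_summable_cube (k : ℕ) :
    Summable (fun n : ℕ =>
      1 / (((n : ℝ) + k + 1) * ((n : ℝ) + k + 2) * ((n : ℝ) + k + 3))) := by
  refine Summable.of_nonneg_of_le (fun n => by positivity) (fun n => ?_) aux_summable_base
  have hk' : (0 : ℝ) ≤ k := Nat.cast_nonneg k
  have hn : (0 : ℝ) ≤ n := Nat.cast_nonneg n
  have h1 : ((n : ℝ) + 1) ^ 2 ≤ ((n : ℝ) + k + 1) * ((n : ℝ) + k + 2) * ((n : ℝ) + k + 3) := by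
    have ha : ((n : ℝ) + 1) ^ 2 ≤ ((n : ℝ) + k + 1) * ((n : ℝ) + k + 2) := by nlinarith
    have hb : (0 : ℝ) ≤ ((n : ℝ) + k + 1) * ((n : ℝ) + k + 2) := by positivity
    nlinarith
  exact one_div_le_one_div_of_le (by positivity) h1

/-- `G a = 1/a + 1/(2a(a+1)) + 2/(3a(a+1)(a+2))` -/
noncomputable def auxG (a : ℝ) : ℝ :=
  1 / a + 1 / (2 * a * (a + 1)) + 2 / (3 * a * (a + 1) * (a + 2))

theorem aux_base_tendsto (c : ℝ) :
    Tendsto (fun n : ℕ => 1 / ((n : ℝ) + c)) atTop (nhds 0) := by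
  simp only [one_div]
  exact Tendsto.comp tendsto_inv_atTop_zero
    (tendsto_atTop_add_const_right _ c tendsto_natCast_atTop_atTop)

theorem aux_G_tendsto (k : ℕ) :
    Tendsto (fun n : ℕ => auxG ((n : ℝ) + k)) atTop (nhds 0) := by
  have h1 := aux_base_tendsto (k : ℝ)
  have h2 := aux_base_tendsto ((k : ℝ) + 1)
  have h3 := aux_base_tendsto ((k : ℝ) + 2)
  have t2 := (h1.mul h2).const_mul (1 / 2 : ℝ)
  have t3 := ((h1.mul h2).mul h3).const_mul (2 / 3 : ℝ)
  have key := (h1.add t2).add t3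
  simp only [mul_zero, add_zero] at key
  refine key.congr (fun n => ?_)
  unfold auxG
  simp only [div_eq_mul_inv, mul_inv, one_mul]
  ring

/-- The pointwise partial-fraction identity. -/
theorem aux_pointwise (a : ℝ) (ha : 1 ≤ a) :
    1 / a ^ 2 - 6 / (a ^ 2 * (a + 1) * (a + 2) * (a + 3)) = auxG a - auxG (a + 1) := by
  have h0 : a ≠ 0 := by linarith
  have h1 : a + 1 ≠ 0 := by linarith
  have h2 : a + 2 ≠ 0 := by linarith
  have h3 : a + 3 ≠ 0 := by linarith
  unfold auxG
  field_simp
  ring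

/-- Tail of the Basel series: `∑_{n≥0} 1/(n+k)² = G(k) + R(k)`. -/
theorem aux_tail_eq (k : ℕ) (hk : 1 ≤ k) :
    HasSum (fun n : ℕ => 1 / ((n : ℝ) + k) ^ 2)
      (auxG k + ∑' n : ℕ,
        6 / (((n : ℝ) + k) ^ 2 * ((n : ℝ) + k + 1) * ((n : ℝ) + k + 2) * ((n : ℝ) + k + 3))) := by
  have hk' : (1 : ℝ) ≤ k := by exact_mod_cast hk
  have hsub : Summable (fun n : ℕ => 1 / ((n : ℝ) + k) ^ 2 -
      6 / (((n : ℝ) + k) ^ 2 * ((n : ℝ) + k + 1) * ((n : ℝ) + k + 2) * ((n : ℝ) + k + 3))) :=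
    (aux_summable_sq k hk).sub (aux_summable_R k hk)
  have hpt : ∀ n : ℕ, 1 / ((n : ℝ) + k) ^ 2 -
      6 / (((n : ℝ) + k) ^ 2 * ((n : ℝ) + k + 1) * ((n : ℝ) + k + 2) * ((n : ℝ) + k + 3)) =
      auxG ((n : ℝ) + k) - auxG (((n + 1 : ℕ) : ℝ) + k) := by
    intro n
    have ha : (1 : ℝ) ≤ (n : ℝ) + k := by
      have : (0 : ℝ) ≤ n := Nat.cast_nonneg n
      linarith
    rw [show (((n + 1 : ℕ) : ℝ) + k) = ((n : ℝ) + k) + 1 by push_cast; ring]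
    exact aux_pointwise ((n : ℝ) + k) ha
  have htel : HasSum (fun n : ℕ => auxG ((n : ℝ) + k) - auxG (((n + 1 : ℕ) : ℝ) + k))
      (auxG (((0 : ℕ) : ℝ) + k)) := by
    refine aux_telescope_hasSum (fun n => auxG ((n : ℝ) + k)) (aux_G_tendsto k) ?_
    exact hsub.congr (fun n => hpt n)
  have htel' : HasSum (fun n : ℕ => 1 / ((n : ℝ) + k) ^ 2 -
      6 / (((n : ℝ) + k) ^ 2 * ((n : ℝ) + k + 1) * ((n : ℝ) + k + 2) * ((n : ℝ) + k + 3)))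
      (auxG k) := by
    have h := htel.congr_fun (fun n => hpt n)
    simpa using h
  have hR := (aux_summable_R k hk).hasSum
  have := htel'.add hR
  exact this.congr_fun (fun n => by ring)

/-- Telescoping evaluation of the cubic tail. -/
theorem aux_cube_eq (k : ℕ) :
    HasSum (fun n : ℕ => 1 / (((n : ℝ) + k + 1) * ((n : ℝ) + k + 2) * ((n : ℝ) + k + 3)))
      (1 / (2 * ((k : ℝ) + 1) * ((k : ℝ) + 2))) := by
  have hk' : (0 : ℝ) ≤ k := Nat.cast_nonneg k
  have hg : Tendsto (fun n : ℕ => 1 / (2 * ((n : ℝ) + k + 1) * ((n : ℝ) + k + 2)))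
      atTop (nhds 0) := by
    have h1 := aux_base_tendsto ((k : ℝ) + 1)
    have h2 := aux_base_tendsto ((k : ℝ) + 2)
    have t := (h1.mul h2).const_mul (1 / 2 : ℝ)
    simp only [mul_zero] at t
    refine t.congr (fun n => ?_)
    simp only [div_eq_mul_inv, mul_inv, one_mul]
    ring
  have hpt : ∀ n : ℕ, 1 / (2 * ((n : ℝ) + k + 1) * ((n : ℝ) + k + 2)) -
      1 / (2 * (((n + 1 : ℕ) : ℝ) + k + 1) * (((n + 1 : ℕ) : ℝ) + k + 2)) =
      1 / (((n : ℝ) + k + 1) * ((n : ℝ) + k + 2) * ((n : ℝ) + k + 3)) := by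
    intro n
    have hn : (0 : ℝ) ≤ n := Nat.cast_nonneg n
    have e1 : (n : ℝ) + k + 1 ≠ 0 := by positivity
    have e2 : (n : ℝ) + k + 2 ≠ 0 := by positivity
    have e3 : (n : ℝ) + k + 3 ≠ 0 := by positivity
    push_cast
    field_simp
    ring
  have key := aux_telescope_hasSum
    (fun n => 1 / (2 * ((n : ℝ) + k + 1) * ((n : ℝ) + k + 2))) hg
    ((aux_summable_cube k).congr (fun n => (hpt n).symm))
  have h := key.congr_fun (fun n => (hpt n).symm)
  simpa using h

theorem aux_sum_id (k : ℕ) : ∑ n ∈ Finset.range k, ((n : ℝ) + 1) = k * (k + 1) / 2 := by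
  induction k with
  | zero => simp
  | succ k ih =>
    rw [Finset.sum_range_succ, ih]
    push_cast
    ring

/-- Euler–Maclaurin-type asymptotic for the sum of natural numbers:
`∑_{n=1}^{k} n - [ k/4 + (k³/2)(π²/6 - ∑_{n=1}^{k-1} 1/n²) ] → -1/12` as `k → ∞`. -/
theorem sum_naturals_asymptotic :
    Tendsto
      (fun k : ℕ =>
        (∑ n ∈ Finset.range k, ((n : ℝ) + 1)) -
          ((k : ℝ) / 4 +
            (k : ℝ) ^ 3 / 2 *
              (Real.pi ^ 2 / 6 - ∑ n ∈ Finset.range (k - 1), 1 / ((n : ℝ) + 1) ^ 2)))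
      atTop (nhds (-1 / 12)) := by
  -- the remainder R k
  set R : ℕ → ℝ := fun k => ∑' n : ℕ,
    6 / (((n : ℝ) + k) ^ 2 * ((n : ℝ) + k + 1) * ((n : ℝ) + k + 2) * ((n : ℝ) + k + 3)) with hR
  -- the model function
  have hmodel : Tendsto (fun k : ℕ =>
      (-1 / 12 + (9 * (k : ℝ) + 2) / (12 * ((k : ℝ) + 1) * ((k : ℝ) + 2))) -
        (k : ℝ) ^ 3 / 2 * R k) atTop (nhds (-1 / 12)) := by
    have hc : Tendsto (fun k : ℕ =>
        (9 * (k : ℝ) + 2) / (12 * ((k : ℝ) + 1) * ((k : ℝ) + 2))) atTop (nhds 0) := by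
      apply squeeze_zero (g := fun k : ℕ => 1 / ((k : ℝ) + 1))
      · intro k
        positivity
      · intro k
        have hk : (0 : ℝ) ≤ k := Nat.cast_nonneg k
        rw [div_le_div_iff₀ (by positivity) (by positivity)]
        nlinarith
      · exact tendsto_one_div_add_atTop_nhds_zero_nat
    have hrem : Tendsto (fun k : ℕ => (k : ℝ) ^ 3 / 2 * R k) atTop (nhds 0) := by
      apply squeeze_zero' (g := fun k : ℕ => 2 / ((k : ℝ) + 1))
      · filter_upwards [eventually_ge_atTop 1] with k hk
        have hk' : (1 : ℝ) ≤ k := by exact_mod_cast hk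
        have hRnn : 0 ≤ R k := tsum_nonneg (fun n => by positivity)
        positivity
      · filter_upwards [eventually_ge_atTop 1] with k hk
        have hk' : (1 : ℝ) ≤ k := by exact_mod_cast hk
        have hRle : R k ≤ 3 / ((k : ℝ) ^ 2 * ((k : ℝ) + 1) * ((k : ℝ) + 2)) := by
          have hle : R k ≤ ∑' n : ℕ, 6 / (k : ℝ) ^ 2 *
              (1 / (((n : ℝ) + k + 1) * ((n : ℝ) + k + 2) * ((n : ℝ) + k + 3))) := by
            refine Summable.tsum_le_tsum (fun n => ?_) (aux_summable_R k hk)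
              ((aux_summable_cube k).mul_left _)
            have hn : (0 : ℝ) ≤ n := Nat.cast_nonneg n
            rw [div_mul_div_comm, mul_one]
            apply div_le_div_of_nonneg_left (by norm_num) (by positivity)
            · have hsq : (k : ℝ) ^ 2 ≤ ((n : ℝ) + k) ^ 2 := by nlinarith
              nlinarith [mul_pos (mul_pos (show (0:ℝ) < (n:ℝ)+k+1 by linarith)
                (show (0:ℝ) < (n:ℝ)+k+2 by linarith)) (show (0:ℝ) < (n:ℝ)+k+3 by linarith)]
          calc R k ≤ ∑' n : ℕ, 6 / (k : ℝ) ^ 2 *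
                (1 / (((n : ℝ) + k + 1) * ((n : ℝ) + k + 2) * ((n : ℝ) + k + 3))) := hle
            _ = 6 / (k : ℝ) ^ 2 * (1 / (2 * ((k : ℝ) + 1) * ((k : ℝ) + 2))) := by
                rw [tsum_mul_left, (aux_cube_eq k).tsum_eq]
            _ = 3 / ((k : ℝ) ^ 2 * ((k : ℝ) + 1) * ((k : ℝ) + 2)) := by
                rw [div_mul_div_comm, mul_one, div_eq_div_iff (by positivity) (by positivity)]
                ring
        calc (k : ℝ) ^ 3 / 2 * R k
            ≤ (k : ℝ) ^ 3 / 2 * (3 / ((k : ℝ) ^ 2 * ((k : ℝ) + 1) * ((k : ℝ) + 2))) := by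
              apply mul_le_mul_of_nonneg_left hRle (by positivity)
          _ ≤ 2 / ((k : ℝ) + 1) := by
              rw [div_mul_div_comm, div_le_div_iff₀ (by positivity) (by positivity)]
              nlinarith
      · have := tendsto_one_div_add_atTop_nhds_zero_nat.const_mul (2 : ℝ)
        rw [mul_zero] at this
        refine this.congr (fun k => by rw [mul_one_div])
    have := ((tendsto_const_nhds (x := (-1 / 12 : ℝ))).add hc).sub hrem
    simpa using this
  refine Tendsto.congr' ?_ hmodel
  filter_upwards [eventually_ge_atTop 1] with k hk
  have hk' : (1 : ℝ) ≤ k := by exact_mod_cast hk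
  -- the tail identity
  have htail : Real.pi ^ 2 / 6 - ∑ n ∈ Finset.range (k - 1), 1 / ((n : ℝ) + 1) ^ 2 =
      auxG k + R k := by
    have h1 := Summable.sum_add_tsum_nat_add (f := fun n : ℕ => 1 / ((n : ℝ) + 1) ^ 2) (k - 1)
      aux_summable_base
    rw [aux_basel.tsum_eq] at h1
    have h2 : (∑' i : ℕ, 1 / (((i + (k - 1) : ℕ) : ℝ) + 1) ^ 2) =
        ∑' i : ℕ, 1 / ((i : ℝ) + k) ^ 2 := by
      apply tsum_congr
      intro i
      congr 2
      push_cast [Nat.cast_sub hk]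
      ring
    rw [h2] at h1
    rw [← h1, (aux_tail_eq k hk).tsum_eq]
    ring
  rw [htail, aux_sum_id k]
  -- the rational identity
  have hrat : (k : ℝ) * ((k : ℝ) + 1) / 2 - ((k : ℝ) / 4 + (k : ℝ) ^ 3 / 2 * auxG k) =
      -1 / 12 + (9 * (k : ℝ) + 2) / (12 * ((k : ℝ) + 1) * ((k : ℝ) + 2)) := by
    have h0 : (k : ℝ) ≠ 0 := by linarith
    have h1 : (k : ℝ) + 1 ≠ 0 := by linarith
    have h2 : (k : ℝ) + 2 ≠ 0 := by linarith
    unfold auxG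
    field_simp
    ring
  rw [← hrat]
  ring
end

section
/- Let f: ℝ → ℝ be given by f(x) = x e^x. For each w > 0, the principal solution s = W(w) of f(s) = w satisfies: for every sequence of positive reals (a_m) with a_m = Σ over the solutions z of f(z) = w (in the relevant factorization) of z^{-m}, one has W(w) = lim_{m→∞} a_m^{-1/m} whenever W(w) is the smallest-modulus solution. In particular, if g(z) = z e^z − w has a unique real zero z₁ = W(w) of smallest modulus among all its complex zeros, then z₁ = lim_{m→∞} (Σ_z z^{-m})^{-1/m} where the sum runs over all zeros z of g with the series absolutely convergent. -/
/-! Factoring out the smallest zero gives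
`∑ₙ zₙ^(-m) = z₀^(-m) (1 + ∑_{n ≥ 1} (z₀ / zₙ)^m)`. The ratios have modulus `< 1` and are
square-summable, so the tail tends to `0` by dominated convergence. Since `z₀^(-m)` is a positive
real, the principal `(-1/m)`-th power splits over the product, leaving `z₀ (1 + o(1))^(-1/m) → z₀`. -/

open Filter Topology

theorem tendsto_tsum_pow_atTop_nhds_zero {𝕜 : Type*} [NormedDivisionRing 𝕜] [CompleteSpace 𝕜]
    {r : ℕ → 𝕜} {k : ℕ} (hr : ∀ n, ‖r n‖ < 1) (hk : Summable fun n => ‖r n‖ ^ k) :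
    Tendsto (fun m => ∑' n, r n ^ m) atTop (𝓝 0) := by
  have hbound : ∀ᶠ m in atTop, ∀ n, ‖r n ^ m‖ ≤ ‖r n‖ ^ k := by
    filter_upwards [eventually_ge_atTop k] with m hm n
    rw [norm_pow]
    exact pow_le_pow_of_le_one (norm_nonneg _) (hr n).le hm
  simpa using tendsto_tsum_of_dominated_convergence hk
    (fun n => tendsto_pow_atTop_nhds_zero_of_norm_lt_one (hr n)) hbound

theorem tsum_zpow_neg_eq_mul_one_add {K : Type*} [Field K] [TopologicalSpace K]
    [IsTopologicalRing K] [T2Space K] {z : ℕ → K} (h0 : z 0 ≠ 0) {m : ℕ}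
    (hs : Summable fun n => z n ^ (-(m : ℤ))) :
    ∑' n, z n ^ (-(m : ℤ)) = z 0 ^ (-(m : ℤ)) * (1 + ∑' n, (z 0 / z (n + 1)) ^ m) := by
  rw [hs.tsum_eq_zero_add, mul_add, mul_one, ← tsum_mul_left]
  congr 1
  refine tsum_congr fun n => ?_
  simp only [div_pow, zpow_neg, zpow_natCast]
  rw [← mul_div_assoc, inv_mul_cancel₀ (pow_ne_zero m h0), one_div]

namespace Complex

theorem ofReal_mul_cpow {a : ℝ} (ha : 0 < a) {x : ℂ} (hx : x ≠ 0) (r : ℂ) :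
    ((a : ℂ) * x) ^ r = (a : ℂ) ^ r * x ^ r := by
  have ha' : (a : ℂ) ≠ 0 := ofReal_ne_zero.2 ha.ne'
  rw [cpow_def_of_ne_zero (mul_ne_zero ha' hx), log_ofReal_mul ha hx, cpow_def_of_ne_zero ha',
    cpow_def_of_ne_zero hx, ofReal_log ha.le, add_mul, exp_add]

theorem ofReal_zpow_neg_cpow_neg_inv {a : ℝ} (ha : 0 < a) {m : ℕ} (hm : m ≠ 0) :
    ((a : ℂ) ^ (-(m : ℤ))) ^ (-(1 : ℂ) / m) = a := by
  have hm' : (m : ℝ) ≠ 0 := Nat.cast_ne_zero.2 hm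
  rw [← ofReal_zpow, show -(1 : ℂ) / m = ((-1 / m : ℝ) : ℂ) by push_cast; rfl,
    ← ofReal_cpow (zpow_pos ha _).le, ← Real.rpow_intCast, ← Real.rpow_mul ha.le]
  push_cast
  rw [show -(m : ℝ) * (-1 / m) = 1 by field_simp, Real.rpow_one]

theorem tendsto_ofReal_zpow_neg_mul_one_add_cpow {a : ℝ} (ha : 0 < a) {ε : ℕ → ℂ}
    (hε : Tendsto ε atTop (𝓝 0)) :
    Tendsto (fun m : ℕ => ((a : ℂ) ^ (-(m : ℤ)) * (1 + ε m)) ^ (-(1 : ℂ) / m)) atTop (𝓝 a) := by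
  have hbase : Tendsto (fun m => 1 + ε m) atTop (𝓝 1) := by
    simpa using tendsto_const_nhds.add hε
  have hexp : Tendsto (fun m : ℕ => -(1 : ℂ) / m) atTop (𝓝 0) := by
    simpa using (tendsto_const_div_atTop_nhds_zero_nat (-1 : ℝ)).ofReal
  have hlim := (hbase.cpow hexp one_mem_slitPlane).const_mul (a : ℂ)
  rw [one_cpow, mul_one] at hlim
  refine hlim.congr' ?_
  filter_upwards [eventually_ne_atTop 0, hbase.eventually_ne one_ne_zero] with m hm hne
  rw [← ofReal_zpow, ofReal_mul_cpow (zpow_pos ha _) hne, ofReal_zpow,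
    ofReal_zpow_neg_cpow_neg_inv ha hm]

end Complex

theorem lambertW_root_extraction_general (z : ℕ → ℂ)
    (hreal : (z 0).im = 0) (hposre : 0 < (z 0).re)
    (hmin : ∀ n, n ≠ 0 → ‖z 0‖ < ‖z n‖)
    (hsum : ∀ m : ℕ, 2 ≤ m → Summable fun n => ‖z n‖ ^ (-(m : ℝ))) :
    Tendsto (fun m : ℕ => (∑' n, (z n) ^ (-(m : ℤ))) ^ (-(1 : ℂ) / m))
      atTop (nhds (z 0)) := by
  have hz0 : z 0 = ((z 0).re : ℂ) := Complex.ext (by simp) (by simp [hreal])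
  have hz0_ne : z 0 ≠ 0 := fun h => by simp [h] at hposre
  have hnorm : ∀ (m : ℕ) n, ‖z n‖ ^ (-(m : ℝ)) = ‖z n ^ (-(m : ℤ))‖ := by
    simp
  have hratio : ∀ n, ‖z 0 / z (n + 1)‖ < 1 := fun n => by
    rw [norm_div, div_lt_one ((norm_nonneg _).trans_lt (hmin _ n.succ_ne_zero))]
    exact hmin _ n.succ_ne_zero
  have hratio_sq : Summable fun n => ‖z 0 / z (n + 1)‖ ^ 2 := by
    have h2 := ((summable_nat_add_iff 1).2 (hsum 2 le_rfl)).mul_left (‖z 0‖ ^ 2)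
    refine h2.congr fun n => ?_
    rw [hnorm, norm_div, div_pow, norm_zpow, zpow_neg, zpow_natCast, div_eq_mul_inv]
  have hS : ∀ᶠ m : ℕ in atTop, ∑' n, z n ^ (-(m : ℤ))
      = ((z 0).re : ℂ) ^ (-(m : ℤ)) * (1 + ∑' n, (z 0 / z (n + 1)) ^ m) := by
    filter_upwards [eventually_ge_atTop 2] with m hm
    rw [tsum_zpow_neg_eq_mul_one_add hz0_ne
      (Summable.of_norm (by simpa only [hnorm] using hsum m hm)), ← hz0]
  rw [hz0]
  refine (Complex.tendsto_ofReal_zpow_neg_mul_one_add_cpow hposre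
    (tendsto_tsum_pow_atTop_nhds_zero hratio hratio_sq)).congr' ?_
  filter_upwards [hS] with m hm
  rw [hm]

/-- Root extraction for the Lambert-W equation. Fix `w > 0` and let `z : ℕ → ℂ` enumerate
(injectively) the zeros of `g(ζ) = ζ e^ζ - w`. Suppose `z 0` is real (the principal
solution `W(w)`), of strictly smallest modulus among all zeros, and that the generalized
zeta series `∑' n, ‖z n‖^(-m)` converges for all `m ≥ 2`. Then
`z 0 = lim_{m → ∞} (∑' n, (z n)^(-m)) ^ (-1/m)` (complex power). -/
theorem lambertW_root_extraction (w : ℝ) (hw : 0 < w) (z : ℕ → ℂ)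
    (hinj : Function.Injective z)
    (hzeros : ∀ s : ℂ, s * Complex.exp s - w = 0 ↔ ∃ n, s = z n)
    (hreal : (z 0).im = 0) (hposre : 0 < (z 0).re)
    (hmin : ∀ n, n ≠ 0 → ‖z 0‖ < ‖z n‖)
    (hsum : ∀ m : ℕ, 2 ≤ m → Summable fun n => ‖z n‖ ^ (-(m : ℝ))) :
    Tendsto (fun m : ℕ => (∑' n, (z n) ^ (-(m : ℤ))) ^ (-(1 : ℂ) / m))
      atTop (nhds (z 0)) :=
  lambertW_root_extraction_general z hreal hposre hmin hsum
end
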